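/- Let m be a positive integer and let B_kI, B_kO, B_dI, B_dO, B_pI, B_pO, lenλ, Γ, W, C, L be nonnegative real numbers and r ≤ f real numbers. Suppose B = B_kI + B_kO + B_dI + B_dO + B_pI + B_pO, len* = lenλ + B_kI + B_kO, Γ ≤ (m − 1)·len* − B_kI − B_pI − B_pO, m·(f − r) = B + W + Γ, W ≤ C, and lenλ ≤ L. Then f − r ≤ (C + (m − 1)·L + I)/m, where I = (m − 1)·B_kI + B_dI + m·B_kO + B_dO. (This is Lemma 3 of the paper: the response time of a job is bounded by (C_i + (m_i − 1)·L_i + I_i)/m_i.) -/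

import Mathlib

/-!
Of the `m·(f − r)` processor time, the working part is at most `C`. In the bound on the
idle time `Γ`, the parallel blocking cancels against its share of `B` and the key-path
blocking `B_kI`, `B_kO` is counted `m − 1` resp. `m` times, so `B + Γ ≤ (m − 1)·lenλ + I`; finally
`lenλ ≤ L` because `m ≥ 1`.
-/

theorem blocking_add_idle_le (m BkI BkO BdI BdO BpI BpO lenKey Γ B lenStar I : ℝ)
    (hB : B = BkI + BkO + BdI + BdO + BpI + BpO)
    (hlenStar : lenStar = lenKey + BkI + BkO)
    (hΓ : Γ ≤ (m - 1) * lenStar - BkI - BpI - BpO)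
    (hI : I = (m - 1) * BkI + BdI + m * BkO + BdO) :
    B + Γ ≤ (m - 1) * lenKey + I := by
  subst hB hlenStar hI
  linarith

theorem response_time_key_path_bound_general
    (m : ℕ) (hm : 0 < m)
    (BkI BkO BdI BdO BpI BpO lenKey Γ W C L : ℝ)
    (r f : ℝ)
    (B lenStar I : ℝ)
    (hB : B = BkI + BkO + BdI + BdO + BpI + BpO)
    (hlenStar : lenStar = lenKey + BkI + BkO)
    (hΓ : Γ ≤ ((m : ℝ) - 1) * lenStar - BkI - BpI - BpO)
    (hdecomp : (m : ℝ) * (f - r) = B + W + Γ)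
    (hWC : W ≤ C)
    (hlenL : lenKey ≤ L)
    (hI : I = ((m : ℝ) - 1) * BkI + BdI + (m : ℝ) * BkO + BdO) :
    f - r ≤ (C + ((m : ℝ) - 1) * L + I) / m := by
  have hm_pos : (0 : ℝ) < m := by exact_mod_cast hm
  have hm_sub_one : (0 : ℝ) ≤ m - 1 := by
    rw [sub_nonneg]
    exact_mod_cast hm
  have hBΓ := blocking_add_idle_le m BkI BkO BdI BdO BpI BpO lenKey Γ B lenStar I hB hlenStar hΓ hI
  rw [le_div_iff₀ hm_pos]
  calc (f - r) * m = W + (B + Γ) := by rw [mul_comm, hdecomp]; ring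
    _ ≤ C + ((m - 1) * lenKey + I) := add_le_add hWC hBΓ
    _ ≤ C + ((m - 1) * L + I) := by gcongr
    _ = C + (m - 1) * L + I := by ring

/-- Lemma 3: the response time of a job is bounded by
`(C + (m − 1)·L + I)/m` where `I = (m − 1)·B_kI + B_dI + m·B_kO + B_dO`. -/
theorem response_time_key_path_bound
    (m : ℕ) (hm : 0 < m)
    (BkI BkO BdI BdO BpI BpO lenKey Γ W C L : ℝ)
    (hBkI : 0 ≤ BkI) (hBkO : 0 ≤ BkO) (hBdI : 0 ≤ BdI) (hBdO : 0 ≤ BdO)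
    (hBpI : 0 ≤ BpI) (hBpO : 0 ≤ BpO) (hlenKey : 0 ≤ lenKey) (hΓ0 : 0 ≤ Γ)
    (hW0 : 0 ≤ W) (hC0 : 0 ≤ C) (hL0 : 0 ≤ L)
    (r f : ℝ) (hrf : r ≤ f)
    (B lenStar I : ℝ)
    (hB : B = BkI + BkO + BdI + BdO + BpI + BpO)
    (hlenStar : lenStar = lenKey + BkI + BkO)
    (hΓ : Γ ≤ ((m : ℝ) - 1) * lenStar - BkI - BpI - BpO)
    (hdecomp : (m : ℝ) * (f - r) = B + W + Γ)
    (hWC : W ≤ C)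
    (hlenL : lenKey ≤ L)
    (hI : I = ((m : ℝ) - 1) * BkI + BdI + (m : ℝ) * BkO + BdO) :
    f - r ≤ (C + ((m : ℝ) - 1) * L + I) / m :=
  response_time_key_path_bound_general m hm BkI BkO BdI BdO BpI BpO lenKey Γ W C L r f B lenStar I
    hB hlenStar hΓ hdecomp hWC hlenL hI
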